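/- Let f : ℝ^p → ℝ be differentiable with ∇f L-Lipschitz on ℝ^p (L > 0), attaining infimum value f* = inf f > −∞, and satisfying the Polyak–Łojasiewicz condition with constant μ > 0: (1/2)‖∇f(θ)‖² ≥ μ (f(θ) − f*) for all θ. Fix a stepsize η ∈ (0, 1/L] and define the gradient descent iterates θ_{t+1} = θ_t − η ∇f(θ_t) from any initial point θ_0. Then for every t ≥ 0, f(θ_t) − f* ≤ (1 − η μ)^t (f(θ_0) − f*). -/

import Mathlib

open intervalIntegral InnerProductSpace

lemma descent_lemma {p : ℕ} (f : EuclideanSpace ℝ (Fin p) → ℝ) (L : ℝ)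
    (hdiff : Differentiable ℝ f)
    (hlip : ∀ x y, ‖gradient f x - gradient f y‖ ≤ L * ‖x - y‖)
    (x y : EuclideanSpace ℝ (Fin p)) :
    f y ≤ f x + ⟪gradient f x, y - x⟫_ℝ + L / 2 * ‖y - x‖ ^ 2 := by
  set v := y - x with hv
  set g : ℝ → ℝ := fun t => f (x + t • v) with hg
  have hc : ∀ t : ℝ, HasDerivAt (fun s : ℝ => x + s • v) v t := by
    intro t
    simpa using ((hasDerivAt_id t).smul_const v).const_add x
  have hgd : ∀ t : ℝ, HasDerivAt g (⟪gradient f (x + t • v), v⟫_ℝ) t := by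
    intro t
    have hf : HasFDerivAt f ((toDual ℝ _) (gradient f (x + t • v))) (x + t • v) :=
      (hasGradientAt_iff_hasFDerivAt).1 (hdiff _).hasGradientAt
    have hcomp := hf.comp_hasDerivAt t (hc t)
    simp only [toDual_apply_apply] at hcomp
    exact hcomp
  have hcont : Continuous fun t : ℝ => ⟪gradient f (x + t • v), v⟫_ℝ := by
    have hgc : Continuous (gradient f) := by
      refine (LipschitzWith.of_dist_le_mul (K := ⟨max L 0, le_max_right _ _⟩) ?_).continuous
      intro a b
      simp only [dist_eq_norm, NNReal.coe_mk]
      exact (hlip a b).trans (mul_le_mul_of_nonneg_right (le_max_left _ _) (norm_nonneg _))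
    exact (hgc.comp (by continuity)).inner continuous_const
  have hint : f y - f x = ∫ t in (0:ℝ)..1, ⟪gradient f (x + t • v), v⟫_ℝ := by
    have := intervalIntegral.integral_eq_sub_of_hasDerivAt
      (fun t _ => hgd t) (hcont.intervalIntegrable 0 1)
    simp only [hg] at this
    rw [this]; simp [hv]
  have hbound : ∀ t ∈ Set.Icc (0:ℝ) 1,
      ⟪gradient f (x + t • v), v⟫_ℝ ≤ ⟪gradient f x, v⟫_ℝ + L * t * ‖v‖ ^ 2 := by
    intro t ht
    have h1 : ⟪gradient f (x + t • v) - gradient f x, v⟫_ℝ ≤ L * t * ‖v‖ ^ 2 := by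
      calc ⟪gradient f (x + t • v) - gradient f x, v⟫_ℝ
          ≤ ‖gradient f (x + t • v) - gradient f x‖ * ‖v‖ := real_inner_le_norm _ _
        _ ≤ (L * ‖(x + t • v) - x‖) * ‖v‖ :=
            mul_le_mul_of_nonneg_right (hlip _ _) (norm_nonneg _)
        _ = L * t * ‖v‖ ^ 2 := by
            simp [norm_smul, abs_of_nonneg ht.1, sq]; ring
    have := inner_sub_left (𝕜 := ℝ) (gradient f (x + t • v)) (gradient f x) v
    linarith [h1, this.symm.le, this.le]
  have hmono : (∫ t in (0:ℝ)..1, ⟪gradient f (x + t • v), v⟫_ℝ)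
      ≤ ∫ t in (0:ℝ)..1, (⟪gradient f x, v⟫_ℝ + L * t * ‖v‖ ^ 2) := by
    apply intervalIntegral.integral_mono_on (by norm_num)
      (hcont.intervalIntegrable 0 1)
      ((continuous_const.add ((continuous_const.mul continuous_id).mul continuous_const)).intervalIntegrable 0 1)
    exact hbound
  have hval : (∫ t in (0:ℝ)..1, (⟪gradient f x, v⟫_ℝ + L * t * ‖v‖ ^ 2))
      = ⟪gradient f x, v⟫_ℝ + L / 2 * ‖v‖ ^ 2 := by
    rw [intervalIntegral.integral_add (intervalIntegrable_const)
      (by exact ((continuous_const.mul continuous_id).mul continuous_const).intervalIntegrable 0 1)]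
    have : (∫ t in (0:ℝ)..1, L * t * ‖v‖ ^ 2) = L / 2 * ‖v‖ ^ 2 := by
      have : (fun t : ℝ => L * t * ‖v‖ ^ 2) = fun t : ℝ => (L * ‖v‖ ^ 2) * t := by
        funext t; ring
      rw [this, intervalIntegral.integral_const_mul, integral_id]
      ring
    rw [this]; simp
  linarith [hint, hmono, hval.le]


/-- Linear (geometric) convergence of full-gradient descent under the
Polyak–Łojasiewicz condition:
`f(θ_t) − f* ≤ (1 − ημ)^t (f(θ_0) − f*)` for stepsize `η ∈ (0, 1/L]`. -/
theorem pl_linear_convergence {p : ℕ} (f : EuclideanSpace ℝ (Fin p) → ℝ)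
    (L μ fstar : ℝ) (hL : 0 < L) (hμ : 0 < μ)
    (hdiff : Differentiable ℝ f)
    (hlip : ∀ x y, ‖gradient f x - gradient f y‖ ≤ L * ‖x - y‖)
    (hinf : IsGLB (Set.range f) fstar)
    (hPL : ∀ θ, μ * (f θ - fstar) ≤ (1 / 2) * ‖gradient f θ‖ ^ 2)
    (η : ℝ) (hη : η ∈ Set.Ioc (0 : ℝ) (1 / L))
    (θ : ℕ → EuclideanSpace ℝ (Fin p))
    (hrec : ∀ t, θ (t + 1) = θ t - η • gradient f (θ t)) :
    ∀ t : ℕ, f (θ t) - fstar ≤ (1 - η * μ) ^ t * (f (θ 0) - fstar) := by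
  obtain ⟨hη0, hη1⟩ := hη
  have hηL : η * L ≤ 1 := by
    rw [← le_div_iff₀ hL] at *; exact hη1
  have hlow : ∀ x, fstar ≤ f x := fun x => hinf.1 ⟨x, rfl⟩
  -- one-step contraction
  have step : ∀ x, f (x - η • gradient f x) - fstar ≤ (1 - η * μ) * (f x - fstar) := by
    intro x
    have hd := descent_lemma f L hdiff hlip x (x - η • gradient f x)
    have hsub : (x - η • gradient f x) - x = (-η) • gradient f x := by
      rw [neg_smul]; abel
    rw [hsub] at hd
    have hinner : ⟪gradient f x, (-η) • gradient f x⟫_ℝ = -η * ‖gradient f x‖ ^ 2 := by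
      rw [real_inner_smul_right, real_inner_self_eq_norm_sq]
    have hnorm : ‖(-η) • gradient f x‖ ^ 2 = η ^ 2 * ‖gradient f x‖ ^ 2 := by
      rw [norm_smul]; simp [abs_of_pos hη0, mul_pow]
    rw [hinner, hnorm] at hd
    have hkey : f (x - η • gradient f x) ≤ f x - (η / 2) * ‖gradient f x‖ ^ 2 := by
      have h2 : L / 2 * (η ^ 2 * ‖gradient f x‖ ^ 2) ≤ (η / 2) * ‖gradient f x‖ ^ 2 := by
        have : L / 2 * η ^ 2 ≤ η / 2 := by nlinarith
        nlinarith [sq_nonneg ‖gradient f x‖]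
      linarith
    have hpl := hPL x
    nlinarith
  -- either 1 - ημ ≥ 0 or f is constant at fstar
  by_cases hc : ∀ x, f x = fstar
  · intro t
    rw [hc, hc]; simp
  · push_neg at hc
    obtain ⟨x₀, hx₀⟩ := hc
    have hx₀' : fstar < f x₀ := lt_of_le_of_ne (hlow x₀) (Ne.symm hx₀)
    have hμL : μ ≤ L := by
      have hd := descent_lemma f L hdiff hlip x₀ (x₀ - (1/L) • gradient f x₀)
      have hsub : (x₀ - (1/L) • gradient f x₀) - x₀ = (-(1/L)) • gradient f x₀ := by
        rw [neg_smul]; abel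
      rw [hsub, real_inner_smul_right, real_inner_self_eq_norm_sq, norm_smul] at hd
      rw [Real.norm_eq_abs, abs_neg, abs_of_pos (show (0:ℝ) < 1/L by positivity)] at hd
      have hge := hlow (x₀ - (1/L) • gradient f x₀)
      have hpl := hPL x₀
      have hL' : L ≠ 0 := ne_of_gt hL
      have : (1/2) * ‖gradient f x₀‖ ^ 2 ≤ L * (f x₀ - fstar) := by
        have e : L / 2 * (1/L * ‖gradient f x₀‖) ^ 2 = (1/(2*L)) * ‖gradient f x₀‖ ^ 2 := by
          field_simp
        rw [e] at hd
        have e2 : (1:ℝ)/(2*L) = (1/2)*(1/L) := by ring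
        rw [e2] at hd
        have h3 : (1/2)*(1/L) * ‖gradient f x₀‖ ^ 2 ≤ f x₀ - fstar := by linarith
        have h4 := mul_le_mul_of_nonneg_left h3 hL.le
        have h5 : (1/L) * L = 1 := by field_simp
        nlinarith [h4, h5]
      nlinarith
    have hpos : 0 ≤ 1 - η * μ := by nlinarith
    intro t
    induction t with
    | zero => simp
    | succ n ih =>
      have h1 : f (θ (n+1)) - fstar ≤ (1 - η * μ) * (f (θ n) - fstar) := by
        rw [hrec n]; exact step (θ n)
      calc f (θ (n+1)) - fstar ≤ (1 - η * μ) * (f (θ n) - fstar) := h1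
        _ ≤ (1 - η * μ) * ((1 - η * μ) ^ n * (f (θ 0) - fstar)) :=
            mul_le_mul_of_nonneg_left ih hpos
        _ = (1 - η * μ) ^ (n+1) * (f (θ 0) - fstar) := by ring
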